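/- Let n ≥ 2 and β > −n/2, and let q be such that its Fourier transform q̂ : ℝⁿ → ℝ is a continuous function satisfying: (i) q̂(ξ) ≥ 0 for all ξ ∈ ℝⁿ; (ii) there is c > 0 and C > 0 such that q̂(ξ) ≥ C ⟨ξ⟩^{−n/2−β} whenever |ξ| > c; (iii) q̂(0) > 0. Define S(q)(η) := (1/|η|) ∫_{Γ(η)} q̂(ξ) q̂(η−ξ) dσ_η(ξ) for η ≠ 0, where Γ(η) := {ξ ∈ ℝⁿ : |ξ − η/2| = |η|/2} with surface measure σ_η. Then there is a constant C' > 0, independent of η, such that for every η with |η| > 4c, S(q)(η) ≥ C' max( ⟨η⟩^{−β−n/2−1}, ⟨η⟩^{−2β−2} ). -/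

import Mathlib

/-!
`Γ(η)` is the sphere centred at `η/2` through `0` and `η`. Near `ξ = 0`, continuity gives
`q̂(ξ) ≥ q̂(0)/2` while `q̂(η - ξ) ≳ ⟨η⟩^{-n/2-β}`; integrating over the cap of `Γ(η)` in a fixed
small ball around `0` and dividing by `|η|` gives `⟨η⟩^{-β-n/2-1}`. Near a point `p ∈ Γ(η)` with
`|p| = |η - p| = |η|/√2` both factors are `≳ ⟨η⟩^{-n/2-β}` on the cap of radius `|η|/4`, whose
measure is `≳ |η|^{n-1}`; this gives `⟨η⟩^{-2β-2}`.

A cap of a sphere inside a ball of radius `δ ≤ R` has `(n-1)`-dimensional Hausdorff measure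
`≳ δ^{n-1}`: the orthogonal projection onto the tangent hyperplane is 1-Lipschitz and maps the cap
onto a hyperplane ball of radius `δ/2`. The sphere has finite measure, so that the integrals are not
the junk value `0`, because it is locally the radial projection of a bounded piece of a hyperplane.
-/

open MeasureTheory
open scoped ENNReal

noncomputable section

abbrev Euc (n : ℕ) := EuclideanSpace ℝ (Fin n)

/-- The Japanese bracket `⟨x⟩ = (1+|x|²)^{1/2}`. -/
def jap {n : ℕ} (x : Euc n) : ℝ := Real.sqrt (1 + ‖x‖ ^ 2)

/-- The Ewald sphere measure `σ_{rη}`: the `(n-1)`-dimensional Hausdorff measure restricted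
to `Γ_r(η) = {ξ : |ξ - η/2| = r|η|/2}`. -/
def ewaldM (n : ℕ) (r : ℝ) (η : Euc n) : Measure (Euc n) :=
  (MeasureTheory.Measure.hausdorffMeasure ((n : ℝ) - 1)).restrict
    (Metric.sphere ((2 : ℝ)⁻¹ • η) (r * ‖η‖ / 2))

open Metric Module
open scoped RealInnerProductSpace

theorem lipschitzOnWith_inv_norm_smul {F : Type*} [NormedAddCommGroup F] [NormedSpace ℝ F] :
    LipschitzOnWith 2 (fun y : F => ‖y‖⁻¹ • y) {y | 1 ≤ ‖y‖} := by
  refine LipschitzOnWith.of_dist_le_mul fun x (hx : 1 ≤ ‖x‖) y (hy : 1 ≤ ‖y‖) => ?_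
  have hx0 : 0 < ‖x‖ := one_pos.trans_le hx
  have hy0 : 0 < ‖y‖ := one_pos.trans_le hy
  have hsplit : ‖x‖⁻¹ • x - ‖y‖⁻¹ • y =
      ‖x‖⁻¹ • (x - y) + (‖x‖⁻¹ * (‖y‖ - ‖x‖)) • (‖y‖⁻¹ • y) := by
    have : ‖x‖⁻¹ * (‖y‖ - ‖x‖) * ‖y‖⁻¹ = ‖x‖⁻¹ - ‖y‖⁻¹ := by field_simp
    rw [smul_smul, this]
    module
  have hunit : ‖‖y‖⁻¹ • y‖ = 1 := by
    rw [norm_smul, norm_inv, norm_norm, inv_mul_cancel₀ hy0.ne']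
  have hxinv : ‖x‖⁻¹ ≤ 1 := inv_le_one_of_one_le₀ hx
  rw [dist_eq_norm, dist_eq_norm, hsplit, NNReal.coe_ofNat]
  calc _ ≤ ‖x‖⁻¹ * ‖x - y‖ + ‖x‖⁻¹ * |‖y‖ - ‖x‖| := by
        refine (norm_add_le _ _).trans_eq ?_
        rw [norm_smul, norm_smul, hunit, norm_mul, norm_inv, norm_norm, Real.norm_eq_abs, mul_one]
    _ ≤ 1 * ‖x - y‖ + 1 * ‖x - y‖ := by
        gcongr
        rw [abs_sub_comm]
        exact abs_norm_sub_norm_le x y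
    _ = 2 * ‖x - y‖ := by ring

section InnerProductSpace

variable {E : Type*} [NormedAddCommGroup E] [InnerProductSpace ℝ E]

theorem sphere_inter_ball_subset_image_inv_norm_smul {x : E} (hx : ‖x‖ = 1) :
    sphere 0 1 ∩ ball x 1 ⊆ (fun y : E => ‖y‖⁻¹ • y) ''
      ((fun v : (ℝ ∙ x)ᗮ => x + (v : E)) '' closedBall 0 3 ∩ {y | 1 ≤ ‖y‖}) := by
  rintro z ⟨hz, hzx⟩
  have hz1 : ‖z‖ = 1 := by simpa using hz
  set t := ⟪z, x⟫
  have ht : 1 / 2 < t := by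
    have h := norm_sub_sq_real z x
    rw [hz1, hx] at h
    have : ‖z - x‖ < 1 := by simpa [dist_eq_norm] using hzx
    nlinarith [norm_nonneg (z - x)]
  have ht1 : t ≤ 1 := by simpa [hz1, hx] using real_inner_le_norm z x
  have ht0 : 0 < t := by linarith
  have hnorm : ‖t⁻¹ • z‖ = t⁻¹ := by
    rw [norm_smul, hz1, mul_one, norm_inv, Real.norm_of_nonneg ht0.le]
  refine ⟨t⁻¹ • z, ⟨⟨⟨t⁻¹ • z - x, ?_⟩, ?_, by simp⟩, ?_⟩, ?_⟩
  · rw [Submodule.mem_orthogonal_singleton_iff_inner_right, inner_sub_right,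
      real_inner_smul_right, real_inner_comm, inv_mul_cancel₀ ht0.ne',
      real_inner_self_eq_norm_sq, hx]
    norm_num
  · rw [mem_closedBall, dist_zero_right, Submodule.coe_norm]
    have : t⁻¹ < 2 := by rw [inv_lt_comm₀ ht0 two_pos]; linarith
    linarith [norm_sub_le (t⁻¹ • z) x]
  · show 1 ≤ ‖t⁻¹ • z‖
    rw [hnorm]
    exact (one_le_inv₀ ht0).mpr ht1
  · simp only
    rw [hnorm, inv_inv, smul_smul, mul_inv_cancel₀ ht0.ne', one_smul]

theorem mem_image_sphere_inter_ball_tangentProjection {m p v : E} {R δ : ℝ} (hR : 0 < R)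
    (hp : dist p m = R) (hv : v ∈ (ℝ ∙ (p - m))ᗮ) (hvR : ‖v‖ ≤ R) (hvδ : 2 * ‖v‖ < δ) :
    p + v ∈ (fun x => p + (ℝ ∙ (p - m))ᗮ.starProjection (x - p)) '' (sphere m R ∩ ball p δ) := by
  have hpm : ‖p - m‖ = R := by rw [← dist_eq_norm, hp]
  have hperp : ⟪p - m, v⟫ = 0 := Submodule.mem_orthogonal_singleton_iff_inner_right.mp hv
  have hnorm (a : ℝ) : ‖a • (p - m) + v‖ ^ 2 = a ^ 2 * R ^ 2 + ‖v‖ ^ 2 := by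
    rw [norm_add_sq_real, real_inner_smul_left, hperp, norm_smul, hpm, Real.norm_eq_abs,
      mul_pow, sq_abs]
    ring
  set s := √(1 - (‖v‖ / R) ^ 2)
  have hs : s ^ 2 * R ^ 2 = R ^ 2 - ‖v‖ ^ 2 := by
    have hvR' : 0 ≤ 1 - (‖v‖ / R) ^ 2 := by
      rw [sub_nonneg, div_pow, div_le_one (by positivity)]
      exact pow_le_pow_left₀ (norm_nonneg v) hvR 2
    rw [Real.sq_sqrt hvR']
    field_simp
  have hs0 : 0 ≤ s := Real.sqrt_nonneg _
  have hs1 : s ≤ 1 := Real.sqrt_le_one.mpr (by nlinarith)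
  have hxp : m + s • (p - m) + v - p = (s - 1) • (p - m) + v := by module
  refine ⟨m + s • (p - m) + v, ⟨?_, ?_⟩, ?_⟩
  · rw [mem_sphere, dist_eq_norm, show m + s • (p - m) + v - m = s • (p - m) + v by abel,
      ← sq_eq_sq₀ (norm_nonneg _) hR.le, hnorm, hs]
    ring
  · rw [mem_ball, dist_eq_norm, hxp,
      ← sq_lt_sq₀ (norm_nonneg _) (by linarith [norm_nonneg v]), hnorm]
    nlinarith [norm_nonneg v]
  · dsimp only
    rw [hxp, map_add, map_smul,
      Submodule.starProjection_orthogonalComplement_singleton_eq_zero,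
      Submodule.starProjection_eq_self_iff.mpr hv, smul_zero, zero_add]

theorem exists_equator_point [FiniteDimensional ℝ E] (hE : 2 ≤ finrank ℝ E) (η : E) :
    ∃ p, dist p ((2 : ℝ)⁻¹ • η) = ‖η‖ / 2 ∧ ‖p‖ ^ 2 = ‖η‖ ^ 2 / 2 ∧
      ‖η - p‖ ^ 2 = ‖η‖ ^ 2 / 2 := by
  obtain ⟨w, hw, hw0⟩ : ∃ w ∈ (ℝ ∙ η)ᗮ, w ≠ 0 := by
    refine Submodule.exists_mem_ne_zero_of_ne_bot (Submodule.one_le_finrank_iff.mp ?_)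
    have h1 := (ℝ ∙ η).finrank_add_finrank_orthogonal
    have h2 : finrank ℝ (ℝ ∙ η) ≤ 1 := by
      simpa using finrank_span_le_card (R := ℝ) ({η} : Set E)
    omega
  have hηw : ⟪η, w⟫ = 0 := Submodule.mem_orthogonal_singleton_iff_inner_right.mp hw
  set u := (‖η‖ / 2 / ‖w‖) • w
  have hu : ‖u‖ = ‖η‖ / 2 := by
    rw [norm_smul, Real.norm_of_nonneg (by positivity),
      div_mul_cancel₀ _ (norm_ne_zero_iff.mpr hw0)]
  have hηu : ⟪(2 : ℝ)⁻¹ • η, u⟫ = 0 := by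
    rw [real_inner_smul_left, real_inner_smul_right, hηw]; simp
  have hη2 : ‖(2 : ℝ)⁻¹ • η‖ = ‖η‖ / 2 := by
    rw [norm_smul]; norm_num; ring
  refine ⟨(2 : ℝ)⁻¹ • η + u, by rw [dist_eq_norm, add_sub_cancel_left, hu], ?_, ?_⟩
  · rw [norm_add_sq_real, hηu, hη2, hu]; ring
  · rw [show η - ((2 : ℝ)⁻¹ • η + u) = (2 : ℝ)⁻¹ • η - u by module, norm_sub_sq_real, hηu,
      hη2, hu]
    ring

variable [FiniteDimensional ℝ E] [MeasurableSpace E] [BorelSpace E] {k : ℕ}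

theorem hausdorffMeasure_image_add_closedBall_lt_top {V : Submodule ℝ E}
    (hV : finrank ℝ V = k) (a : E) (r : ℝ) :
    μH[k] ((fun v : V => a + (v : E)) '' closedBall 0 r) < ∞ := by
  have hiso : Isometry fun v : V => a + (v : E) :=
    (isometry_add_left a).comp isometry_subtype_coe
  rw [hiso.hausdorffMeasure_image (Or.inl k.cast_nonneg), ← hV]
  exact measure_closedBall_lt_top

theorem hausdorffMeasure_unitSphere_lt_top (hk : finrank ℝ E = k + 1) :
    μH[k] (sphere (0 : E) 1) < ∞ := by
  refine (isCompact_sphere 0 1).measure_lt_top_of_nhdsWithin fun x hx => ?_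
  have hx1 : ‖x‖ = 1 := by simpa using hx
  have : Fact (finrank ℝ E = k + 1) := ⟨hk⟩
  have hV : finrank ℝ (ℝ ∙ x)ᗮ = k :=
    Submodule.finrank_orthogonal_span_singleton (norm_ne_zero_iff.mp (hx1 ▸ one_ne_zero))
  refine ⟨sphere 0 1 ∩ ball x 1, inter_mem_nhdsWithin _ (ball_mem_nhds x one_pos), ?_⟩
  calc μH[k] (sphere 0 1 ∩ ball x 1)
      ≤ μH[k] ((fun y : E => ‖y‖⁻¹ • y) ''
          ((fun v : (ℝ ∙ x)ᗮ => x + (v : E)) '' closedBall 0 3 ∩ {y | 1 ≤ ‖y‖})) :=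
        measure_mono (sphere_inter_ball_subset_image_inv_norm_smul hx1)
    _ ≤ 2 ^ (k : ℝ) * μH[k] ((fun v : (ℝ ∙ x)ᗮ => x + (v : E)) '' closedBall 0 3 ∩
          {y | 1 ≤ ‖y‖}) :=
        (lipschitzOnWith_inv_norm_smul.mono Set.inter_subset_right).hausdorffMeasure_image_le
          k.cast_nonneg
    _ < ∞ := ENNReal.mul_lt_top (by simp) <| (measure_mono Set.inter_subset_left).trans_lt <|
        hausdorffMeasure_image_add_closedBall_lt_top hV x 3

theorem hausdorffMeasure_sphere_lt_top (hk : finrank ℝ E = k + 1) (m : E) {R : ℝ}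
    (hR : 0 < R) : μH[k] (sphere m R) < ∞ := by
  have hsub : sphere m R ⊆ (fun y => m + R • y) '' sphere 0 1 := by
    intro x hx
    refine ⟨R⁻¹ • (x - m), ?_, ?_⟩
    · simp [norm_smul, abs_of_pos hR, ← dist_eq_norm, mem_sphere.mp hx, hR.ne']
    · simp [smul_smul, hR.ne']
  have hlip : LipschitzWith ‖R‖₊ fun y : E => m + R • y :=
    LipschitzWith.of_dist_le_mul fun x y => by rw [dist_add_left, dist_smul₀, coe_nnnorm]
  calc μH[k] (sphere m R) ≤ (‖R‖₊ : ℝ≥0∞) ^ (k : ℝ) * μH[k] (sphere (0 : E) 1) :=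
        (measure_mono hsub).trans (hlip.hausdorffMeasure_image_le k.cast_nonneg _)
    _ < ∞ := ENNReal.mul_lt_top (by simp) (hausdorffMeasure_unitSphere_lt_top hk)

theorem exists_pos_mul_pow_le_hausdorffMeasure_sphere_inter_ball
    (hk : finrank ℝ E = k + 1) :
    ∃ κ > 0, ∀ (m p : E) (R δ : ℝ), dist p m = R → 0 < δ → δ ≤ R →
      ENNReal.ofReal (κ * δ ^ k) ≤ μH[k] (sphere m R ∩ ball p δ) := by
  set B := μH[k] (ball (0 : EuclideanSpace ℝ (Fin k)) 1)
  refine ⟨B.toReal / 2 ^ k, div_pos (ENNReal.toReal_pos (measure_ball_pos _ _ one_pos).ne'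
    measure_ball_lt_top.ne) (by positivity), fun m p R δ hp hδ hδR => ?_⟩
  have hR : 0 < R := hδ.trans_le hδR
  have : Fact (finrank ℝ E = k + 1) := ⟨hk⟩
  set V := (ℝ ∙ (p - m))ᗮ
  have hV : finrank ℝ V = k := Submodule.finrank_orthogonal_span_singleton
    (sub_ne_zero.mpr (dist_pos.mp (hp ▸ hR)))
  -- every hyperplane is isometric to `EuclideanSpace ℝ (Fin k)`, which makes `κ` uniform
  set e : EuclideanSpace ℝ (Fin k) ≃ₗᵢ[ℝ] V :=
    ((stdOrthonormalBasis ℝ V).reindex (finCongr hV)).repr.symm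
  have he : Isometry fun y => p + (e y : E) :=
    (isometry_add_left p).comp (isometry_subtype_coe.comp e.isometry)
  have hπ : LipschitzWith 1 fun x => p + V.starProjection (x - p) :=
    LipschitzWith.of_dist_le_mul fun x y => by
      rw [dist_add_left, dist_eq_norm, ← map_sub, sub_sub_sub_cancel_right, NNReal.coe_one,
        one_mul, dist_eq_norm]
      exact V.norm_starProjection_apply_le _
  have hsub : (fun y => p + (e y : E)) '' ball 0 (δ / 2) ⊆
      (fun x => p + V.starProjection (x - p)) '' (sphere m R ∩ ball p δ) := by
    rintro - ⟨y, hy, rfl⟩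
    have hey : ‖(e y : E)‖ < δ / 2 := by
      rw [mem_ball, dist_zero_right, ← e.norm_map y] at hy
      exact hy
    exact mem_image_sphere_inter_ball_tangentProjection hR hp (e y).2 (by linarith)
      (by linarith)
  calc ENNReal.ofReal (B.toReal / 2 ^ k * δ ^ k)
      = ENNReal.ofReal ((δ / 2) ^ k) * B := by
        rw [← ENNReal.ofReal_toReal (a := B) measure_ball_lt_top.ne, ← ENNReal.ofReal_mul
          (by positivity), ENNReal.toReal_ofReal ENNReal.toReal_nonneg, div_pow]
        ring_nf
    _ = μH[k] (ball (0 : EuclideanSpace ℝ (Fin k)) (δ / 2)) := by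
        rw [Measure.addHaar_ball_of_pos _ _ (half_pos hδ), finrank_euclideanSpace_fin]
    _ = μH[k] ((fun y => p + (e y : E)) '' ball 0 (δ / 2)) :=
        (he.hausdorffMeasure_image (Or.inl k.cast_nonneg) _).symm
    _ ≤ μH[k] ((fun x => p + V.starProjection (x - p)) '' (sphere m R ∩ ball p δ)) :=
        measure_mono hsub
    _ ≤ μH[k] (sphere m R ∩ ball p δ) := by
        simpa using hπ.hausdorffMeasure_image_le k.cast_nonneg (sphere m R ∩ ball p δ)

theorem exists_pos_mul_pow_le_integral_sphere (hk : finrank ℝ E = k + 1) :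
    ∃ κ > 0, ∀ {f : E → ℝ}, Continuous f → 0 ≤ f → ∀ {m p : E} {R δ ε : ℝ}, dist p m = R →
      0 < δ → δ ≤ R → 0 ≤ ε → (∀ x ∈ ball p δ, ε ≤ f x) →
      ε * (κ * δ ^ k) ≤ ∫ x, f x ∂μH[k].restrict (sphere m R) := by
  obtain ⟨κ, hκ, hcap⟩ := exists_pos_mul_pow_le_hausdorffMeasure_sphere_inter_ball hk
  refine ⟨κ, hκ, fun {f} hf hf0 {m p R δ ε} hp hδ hδR hε hfε => ?_⟩
  set μ := μH[k].restrict (sphere m R)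
  have : IsFiniteMeasure μ := isFiniteMeasure_restrict.mpr
    (hausdorffMeasure_sphere_lt_top hk m (hδ.trans_le hδR)).ne
  have hint : Integrable f μ := by
    obtain ⟨M, hM⟩ := (isCompact_sphere m R).exists_bound_of_continuousOn hf.continuousOn
    refine Integrable.mono' (integrable_const M) hf.aestronglyMeasurable ?_
    exact (ae_restrict_iff' isClosed_sphere.measurableSet).mpr (ae_of_all _ hM)
  have hμball : κ * δ ^ k ≤ μ.real (ball p δ) := by
    rw [measureReal_def, ← ENNReal.ofReal_le_iff_le_toReal (measure_ne_top μ _),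
      Measure.restrict_apply measurableSet_ball, Set.inter_comm]
    exact hcap m p R δ hp hδ hδR
  calc ε * (κ * δ ^ k) ≤ ε * μ.real (ball p δ) := mul_le_mul_of_nonneg_left hμball hε
    _ ≤ ∫ x in ball p δ, f x ∂μ :=
        setIntegral_ge_of_const_le_real measurableSet_ball (measure_ne_top μ _) hfε
          hint.integrableOn
    _ ≤ ∫ x, f x ∂μ := setIntegral_le_integral hint (ae_of_all _ hf0)

end InnerProductSpace

section JapaneseBracket
variable {n : ℕ}

theorem one_le_jap (x : Euc n) : 1 ≤ jap x :=
  Real.one_le_sqrt.mpr (le_add_of_nonneg_right (sq_nonneg _))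

theorem jap_pos (x : Euc n) : 0 < jap x := one_pos.trans_le (one_le_jap x)

theorem norm_le_jap (x : Euc n) : ‖x‖ ≤ jap x :=
  Real.le_sqrt_of_sq_le (le_add_of_nonneg_left zero_le_one)

theorem jap_le_one_add_norm (x : Euc n) : jap x ≤ 1 + ‖x‖ :=
  Real.sqrt_le_iff.mpr ⟨by positivity, by nlinarith [norm_nonneg x]⟩

theorem jap_le_mul_jap {x y : Euc n} {a : ℝ} (ha : 1 ≤ a) (h : ‖x‖ ≤ a * ‖y‖) :
    jap x ≤ a * jap y := by
  rw [jap, jap, ← Real.sqrt_sq (zero_le_one.trans ha), ← Real.sqrt_mul (by positivity)]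
  exact Real.sqrt_le_sqrt (by nlinarith [norm_nonneg x])

theorem jap_le_jap {x y : Euc n} (h : ‖x‖ ≤ ‖y‖) : jap x ≤ jap y := by
  simpa using jap_le_mul_jap le_rfl (by simpa using h)

end JapaneseBracket

/-- The paper's `S(q)(η)`. -/
def ewaldIntegral {n : ℕ} (qhat : Euc n → ℝ) (η : Euc n) : ℝ :=
  ‖η‖⁻¹ * ∫ ξ, qhat ξ * qhat (η - ξ) ∂(ewaldM n 1 η)

theorem exists_pos_mul_pow_le_integral_ewaldM {n : ℕ} (hn : 1 ≤ n) :
    ∃ κ > 0, ∀ {f : Euc n → ℝ}, Continuous f → 0 ≤ f → ∀ {η p : Euc n} {δ ε : ℝ},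
      dist p ((2 : ℝ)⁻¹ • η) = ‖η‖ / 2 → 0 < δ → δ ≤ ‖η‖ / 2 → 0 ≤ ε →
      (∀ x ∈ ball p δ, ε ≤ f x) → ε * (κ * δ ^ (n - 1)) ≤ ∫ x, f x ∂ewaldM n 1 η := by
  obtain ⟨κ, hκ, h⟩ := exists_pos_mul_pow_le_integral_sphere (E := Euc n) (k := n - 1)
    (by rw [finrank_euclideanSpace_fin]; omega)
  refine ⟨κ, hκ, fun hf hf0 η p δ ε hp hδ hδη hε hfε => ?_⟩
  have hcast : ((n - 1 : ℕ) : ℝ) = (n : ℝ) - 1 := by rw [Nat.cast_sub hn, Nat.cast_one]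
  simpa [ewaldM, hcast] using h hf hf0 hp hδ hδη hε hfε

theorem lt_norm_and_norm_le_of_norm_sq_eq_half {F : Type*} [SeminormedAddCommGroup F] {z w : F}
    {a : ℝ} (hz : ‖z‖ ^ 2 = a ^ 2 / 2) (hwz : ‖w - z‖ < a / 4) : a / 4 < ‖w‖ ∧ ‖w‖ ≤ a := by
  have ha : 0 < a := by linarith [norm_nonneg (w - z)]
  have hz1 : a / 2 ≤ ‖z‖ := by nlinarith [norm_nonneg z]
  have hz2 : ‖z‖ ≤ 3 * a / 4 := by nlinarith [norm_nonneg z]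
  exact ⟨by linarith [norm_sub_norm_le z w, norm_sub_rev w z],
    by linarith [norm_le_insert' w z]⟩

section LowerBounds
variable {n : ℕ} {β c C : ℝ} {qhat : Euc n → ℝ}

theorem exists_mul_le_ewaldIntegral_near_origin (hn : 1 ≤ n) (hβ : -(n : ℝ) / 2 < β)
    (hqc : Continuous qhat) (hq0 : ∀ ξ, 0 ≤ qhat ξ) (hc : 0 < c) (hC : 0 < C)
    (hlow : ∀ ξ : Euc n, c < ‖ξ‖ → C * jap ξ ^ (-(n : ℝ) / 2 - β) ≤ qhat ξ)
    (hq00 : 0 < qhat 0) :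
    ∃ a > 0, ∀ η : Euc n, 4 * c < ‖η‖ →
      a * jap η ^ (-β - (n : ℝ) / 2 - 1) ≤ ewaldIntegral qhat η := by
  obtain ⟨κ, hκ, hint⟩ := exists_pos_mul_pow_le_integral_ewaldM hn
  obtain ⟨δ₀, hδ₀, hnear⟩ := Metric.eventually_nhds_iff_ball.mp
    (hqc.continuousAt.eventually (lt_mem_nhds (half_lt_self hq00)))
  set δ := min c δ₀
  have hδ : 0 < δ := lt_min hc hδ₀
  have he : -(n : ℝ) / 2 - β ≤ 0 := by linarith
  set e := -(n : ℝ) / 2 - β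
  refine ⟨qhat 0 / 2 * (C * 2 ^ e) * (κ * δ ^ (n - 1)), by positivity, fun η hη => ?_⟩
  have hjη : 0 < jap η ^ e := Real.rpow_pos_of_pos (jap_pos η) e
  have hbound :
      ∀ x ∈ ball 0 δ, qhat 0 / 2 * (C * 2 ^ e * jap η ^ e) ≤ qhat x * qhat (η - x) := by
    intro x hx
    rw [mem_ball, dist_zero_right] at hx
    have hxc : ‖x‖ < c := hx.trans_le (min_le_left _ _)
    have hηx : ‖η - x‖ ≤ 2 * ‖η‖ := by linarith [norm_sub_le η x]
    have hfar : C * (2 * jap η) ^ e ≤ qhat (η - x) :=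
      le_trans (mul_le_mul_of_nonneg_left (Real.rpow_le_rpow_of_nonpos (jap_pos _)
        (jap_le_mul_jap one_le_two hηx) he) hC.le) (hlow _ (by linarith [norm_sub_norm_le η x]))
    rw [Real.mul_rpow zero_le_two (jap_pos η).le, ← mul_assoc] at hfar
    exact mul_le_mul (hnear x (mem_ball_zero_iff.mpr (hx.trans_le (min_le_right _ _)))).le hfar
      (by positivity) (hq0 x)
  have hp : dist 0 ((2 : ℝ)⁻¹ • η) = ‖η‖ / 2 := by
    rw [dist_zero_left, norm_smul]; norm_num; ring
  have key := hint (hqc.mul (hqc.comp (continuous_const.sub continuous_id)))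
    (fun ξ => mul_nonneg (hq0 _) (hq0 _)) hp hδ (by linarith [min_le_left c δ₀]) (by positivity)
    hbound
  have hinv : (jap η)⁻¹ ≤ ‖η‖⁻¹ := inv_anti₀ (by linarith) (norm_le_jap η)
  calc qhat 0 / 2 * (C * 2 ^ e) * (κ * δ ^ (n - 1)) * jap η ^ (-β - (n : ℝ) / 2 - 1)
      = (qhat 0 / 2 * (C * 2 ^ e * jap η ^ e) * (κ * δ ^ (n - 1))) * (jap η)⁻¹ := by
        rw [show -β - (n : ℝ) / 2 - 1 = e - 1 by ring, Real.rpow_sub_one (jap_pos η).ne']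
        ring
    _ ≤ ‖η‖⁻¹ * ∫ ξ, qhat ξ * qhat (η - ξ) ∂ewaldM n 1 η := by
        rw [mul_comm]
        exact mul_le_mul hinv key (by positivity) (by positivity)

theorem exists_mul_le_ewaldIntegral_equator (hn : 2 ≤ n) (hβ : -(n : ℝ) / 2 < β)
    (hqc : Continuous qhat) (hq0 : ∀ ξ, 0 ≤ qhat ξ) (hc : 0 < c) (hC : 0 < C)
    (hlow : ∀ ξ : Euc n, c < ‖ξ‖ → C * jap ξ ^ (-(n : ℝ) / 2 - β) ≤ qhat ξ) :
    ∃ a > 0, ∀ η : Euc n, 4 * c < ‖η‖ → a * jap η ^ (-2 * β - 2) ≤ ewaldIntegral qhat η := by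
  obtain ⟨κ, hκ, hint⟩ := exists_pos_mul_pow_le_integral_ewaldM (by omega : 1 ≤ n)
  have he : -(n : ℝ) / 2 - β ≤ 0 := by linarith
  set e := -(n : ℝ) / 2 - β with he_def
  set K := 1 + (4 * c)⁻¹
  have hK : 0 < K := by positivity
  refine ⟨C ^ 2 * κ / (4 ^ (n - 1) * K ^ (n - 2)), by positivity, fun η hη => ?_⟩
  have hη : 0 < ‖η‖ := by linarith
  have hjη : 0 < jap η ^ e := Real.rpow_pos_of_pos (jap_pos η) e
  obtain ⟨p, hp, hp2, hηp2⟩ :=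
    exists_equator_point (by rwa [finrank_euclideanSpace_fin]) η
  have hshell : ∀ z w : Euc n, ‖z‖ ^ 2 = ‖η‖ ^ 2 / 2 → ‖w - z‖ < ‖η‖ / 4 →
      C * jap η ^ e ≤ qhat w := by
    intro z w hz hwz
    obtain ⟨hw1, hw2⟩ := lt_norm_and_norm_le_of_norm_sq_eq_half hz hwz
    exact le_trans (mul_le_mul_of_nonneg_left (Real.rpow_le_rpow_of_nonpos (jap_pos _)
      (jap_le_jap hw2) he) hC.le) (hlow w (by linarith))
  have hbound : ∀ x ∈ ball p (‖η‖ / 4), (C * jap η ^ e) ^ 2 ≤ qhat x * qhat (η - x) := by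
    intro x hx
    rw [mem_ball, dist_eq_norm] at hx
    rw [sq]
    exact mul_le_mul (hshell p x hp2 hx)
      (hshell (η - p) (η - x) hηp2 (by rwa [sub_sub_sub_cancel_left, norm_sub_rev]))
      (by positivity) (hq0 x)
  have key := hint (hqc.mul (hqc.comp (continuous_const.sub continuous_id)))
    (fun ξ => mul_nonneg (hq0 _) (hq0 _)) hp (by positivity) (by linarith) (sq_nonneg _) hbound
  have hjapK : jap η ≤ K * ‖η‖ := by
    have : 1 ≤ (4 * c)⁻¹ * ‖η‖ := by rw [inv_mul_eq_div, le_div_iff₀ (by positivity)]; linarith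
    linarith [jap_le_one_add_norm η]
  have hexp : jap η ^ (-2 * β - 2) = (jap η ^ e) ^ 2 * jap η ^ (n - 2) := by
    rw [sq, ← Real.rpow_add (jap_pos η), ← Real.rpow_natCast, ← Real.rpow_add (jap_pos η),
      Nat.cast_sub hn, he_def]
    congr 1
    push_cast
    ring
  calc C ^ 2 * κ / (4 ^ (n - 1) * K ^ (n - 2)) * jap η ^ (-2 * β - 2)
      ≤ C ^ 2 * κ / (4 ^ (n - 1) * K ^ (n - 2)) * ((jap η ^ e) ^ 2 * (K * ‖η‖) ^ (n - 2)) := by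
        rw [hexp]
        gcongr
        exact (jap_pos η).le
    _ = ‖η‖⁻¹ * ((C * jap η ^ e) ^ 2 * (κ * (‖η‖ / 4) ^ (n - 1))) := by
        rw [div_pow, show n - 1 = n - 2 + 1 by omega]
        field_simp
        rw [mul_pow, pow_succ]; ring
    _ ≤ ewaldIntegral qhat η := mul_le_mul_of_nonneg_left key (by positivity)

end LowerBounds

/-- lower bound for the spherical integral
`S(q)(η) = (1/|η|) ∫_{Γ(η)} q̂(ξ) q̂(η-ξ) dσ_η(ξ)` for a potential whose Fourier transform
`q̂` (here denoted `qhat`) is continuous, non-negative, bounded below by `C⟨ξ⟩^{-n/2-β}` for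
`|ξ| > c`, and positive at the origin: for `|η| > 4c`,
`S(q)(η) ≥ C' max(⟨η⟩^{-β-n/2-1}, ⟨η⟩^{-2β-2})`. -/
theorem stmt14 (n : ℕ) (hn : 2 ≤ n) (β : ℝ) (hβ : -(n : ℝ) / 2 < β)
    (qhat : Euc n → ℝ) (hqc : Continuous qhat) (hq0 : ∀ ξ, 0 ≤ qhat ξ)
    (c C : ℝ) (hc : 0 < c) (hC : 0 < C)
    (hlow : ∀ ξ : Euc n, c < ‖ξ‖ → C * jap ξ ^ (-(n : ℝ) / 2 - β) ≤ qhat ξ)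
    (hq00 : 0 < qhat 0) :
    ∃ C' : ℝ, 0 < C' ∧ ∀ η : Euc n, 4 * c < ‖η‖ →
      C' * max (jap η ^ (-β - (n : ℝ) / 2 - 1)) (jap η ^ (-2 * β - 2)) ≤
        ‖η‖⁻¹ * ∫ ξ, qhat ξ * qhat (η - ξ) ∂(ewaldM n 1 η) := by
  obtain ⟨a₁, ha₁, h₁⟩ :=
    exists_mul_le_ewaldIntegral_near_origin (by omega) hβ hqc hq0 hc hC hlow hq00
  obtain ⟨a₂, ha₂, h₂⟩ := exists_mul_le_ewaldIntegral_equator hn hβ hqc hq0 hc hC hlow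
  refine ⟨min a₁ a₂, lt_min ha₁ ha₂, fun η hη => ?_⟩
  have hpow (s : ℝ) : 0 ≤ jap η ^ s := Real.rpow_nonneg (jap_pos η).le s
  rw [mul_max_of_nonneg _ _ (lt_min ha₁ ha₂).le]
  exact max_le ((mul_le_mul_of_nonneg_right (min_le_left _ _) (hpow _)).trans (h₁ η hη))
    ((mul_le_mul_of_nonneg_right (min_le_right _ _) (hpow _)).trans (h₂ η hη))
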